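/- One-step reduction preserves denotations: if E(x⃗) →^{(p,j,q)} F(x⃗), then for every Φ-structure A and every tuple of arguments x⃗ ∈ Aⁿ, the denotation of E(x⃗) in A equals the denotation of F(x⃗) in A (as partial values, with Kleene strong equality). -/

import Mathlib

/-! Splitting off the argument `G` as a new equation `q(x⃗) = G`, with `q` fresh, changes nothing
on environments that interpret `q` by that equation: on such environments the bodies of `E` and `F`
have the same solutions and the heads have the same value. Hence extending a solution of `E` by the
functional defined by `G` at `q`, and forgetting `q` in a solution of `F`, carry solutions back and
forth; monotonicity of evaluation shows that both operations preserve leastness. -/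

namespace McCarthy

/-- Sorts: individual (`ind`) and Boolean (`bool`). -/
inductive Srt where
  | ind | bool
deriving DecidableEq

/-- A function variable is identified by its sort, arity and index. -/
abbrev FV : Type := Srt × ℕ × ℕ

/-- Explicit terms over a vocabulary `Φ`. -/
inductive Term (Φ : Type) where
  | tt : Term Φ
  | ff : Term Φ
  | ivar : ℕ → Term Φ
  | fapp : FV → List (Term Φ) → Term Φ
  | prim : Φ → List (Term Φ) → Term Φ
  | cond : Srt → Term Φ → Term Φ → Term Φ → Term Φ

variable {Φ : Type}

def isIvar : Term Φ → Bool
  | .ivar _ => true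
  | _ => false

/-- Immediate terms: individual variables, or function variables applied to
individual variables (nullary function variables included). -/
def isImmediate : Term Φ → Bool
  | .ivar _ => true
  | .fapp p args => (args.all isIvar) && (args.length == p.2.1)
  | _ => false

/-- Irreducible terms: immediate terms, Boolean constants, or applications
with immediate arguments. -/
def isIrreducible : Term Φ → Bool
  | .tt => true
  | .ff => true
  | .ivar _ => true
  | .fapp p args => ((args.all isIvar) && (args.length == p.2.1)) || args.all isImmediate
  | .prim _ args => args.all isImmediate
  | .cond _ a b c => isImmediate a && isImmediate b && isImmediate c

/-- The sort of an immediate (or irreducible non-`prim`) term. -/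
def immSort : Term Φ → Srt
  | .tt => .bool
  | .ff => .bool
  | .fapp p _ => p.1
  | .cond s _ _ _ => s
  | _ => .ind

mutual
/-- `sizeT E` counts the occurrences of non-immediate proper subterms of `E`. -/
def sizeT : Term Φ → ℕ
  | .tt => 0
  | .ff => 0
  | .ivar _ => 0
  | .fapp _ args => sizeTL args
  | .prim _ args => sizeTL args
  | .cond _ a b c =>
      (sizeT a + (if isImmediate a then 0 else 1)) +
      (sizeT b + (if isImmediate b then 0 else 1)) +
      (sizeT c + (if isImmediate c then 0 else 1))

def sizeTL : List (Term Φ) → ℕ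
  | [] => 0
  | t :: ts => (sizeT t + (if isImmediate t then 0 else 1)) + sizeTL ts
end

mutual
/-- Renaming of function variables. -/
def renameF (ρ : FV → FV) : Term Φ → Term Φ
  | .tt => .tt
  | .ff => .ff
  | .ivar i => .ivar i
  | .fapp p args => .fapp (ρ p) (renameFL ρ args)
  | .prim f args => .prim f (renameFL ρ args)
  | .cond s a b c => .cond s (renameF ρ a) (renameF ρ b) (renameF ρ c)

def renameFL (ρ : FV → FV) : List (Term Φ) → List (Term Φ)
  | [] => []
  | t :: ts => renameF ρ t :: renameFL ρ ts
end

mutual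
/-- Renaming of individual variables. -/
def renameV (σ : ℕ → ℕ) : Term Φ → Term Φ
  | .tt => .tt
  | .ff => .ff
  | .ivar i => .ivar (σ i)
  | .fapp p args => .fapp p (renameVL σ args)
  | .prim f args => .prim f (renameVL σ args)
  | .cond s a b c => .cond s (renameV σ a) (renameV σ b) (renameV σ c)

def renameVL (σ : ℕ → ℕ) : List (Term Φ) → List (Term Φ)
  | [] => []
  | t :: ts => renameV σ t :: renameVL σ ts
end

mutual
/-- Does the function variable `q` occur in the term? -/
def occursF (q : FV) : Term Φ → Bool
  | .tt => false
  | .ff => false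
  | .ivar _ => false
  | .fapp p args => (decide (p = q)) || occursFL q args
  | .prim _ args => occursFL q args
  | .cond _ a b c => occursF q a || occursF q b || occursF q c

def occursFL (q : FV) : List (Term Φ) → Bool
  | [] => false
  | t :: ts => occursF q t || occursFL q ts
end


/-! ## Extended recursive programs -/

/-- A body equation `p(x⃗) = rhs`. -/
structure Eqn (Φ : Type) where
  p : FV
  xs : List ℕ
  rhs : Term Φ

/-- An extended recursive program `E₀(x⃗) where { p₁(x⃗₁) = E₁, …, p_K(x⃗_K) = E_K }`,
with the body represented as a multiset (set representation of the paper). -/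
structure ExtProg (Φ : Type) where
  fvars : List ℕ
  head : Term Φ
  body : Multiset (Eqn Φ)

/-- The function variables bound by the body of a program. -/
def bodyPvars (E : ExtProg Φ) : Multiset FV := E.body.map Eqn.p

/-- `q` is fresh for `E`: it is not a recursion variable of `E` and occurs nowhere in `E`. -/
def FreshIn (q : FV) (E : ExtProg Φ) : Prop :=
  occursF q E.head = false ∧ ∀ e ∈ E.body, e.p ≠ q ∧ occursF q e.rhs = false

/-- The argument list of an application term (the empty list otherwise). -/
def argsOf : Term Φ → List (Term Φ)
  | .fapp _ as => as
  | .prim _ as => as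
  | .cond _ a b c => [a, b, c]
  | _ => []

/-- Replace the argument list of an application term. -/
def withArgs : Term Φ → List (Term Φ) → Term Φ
  | .fapp p _, as => .fapp p as
  | .prim f _, as => .prim f as
  | .cond s _ _ _, [a, b, c] => .cond s a b c
  | t, _ => t

def isApp : Term Φ → Bool
  | .fapp _ _ => true
  | .prim _ _ => true
  | .cond _ _ _ _ => true
  | _ => false

/-- Labels `(p, j, q)` of arrow reductions. -/
abbrev Lbl : Type := FV × ℕ × FV

/-- The arrow-reduction relation `E(x⃗) →^{(p,j,q)} F(x⃗)` on extended programs: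
either a non-immediate `j`-th argument of the (outermost application) right-hand side
of the body equation for `p` is split off into a new equation for the fresh variable `q`
(body case), or — when `p` is fresh, serving merely as a marker — the non-immediate
`j`-th argument of the head is split off (head case). -/
inductive Step : Lbl → ExtProg Φ → ExtProg Φ → Prop where
  | body (p : FV) (j : ℕ) (q : FV) (E F : ExtProg Φ) (s : Multiset (Eqn Φ)) (e : Eqn Φ)
      (G : Term Φ)
      (hbody : E.body = s + {e}) (hp : e.p = p) (happ : isApp e.rhs = true)
      (hG : (argsOf e.rhs)[j]? = some G) (himm : isImmediate G = false)
      (hq : FreshIn q E) (har : q.2.1 = e.xs.length)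
      (hF : F = ⟨E.fvars, E.head,
        s + {⟨p, e.xs, withArgs e.rhs ((argsOf e.rhs).set j (.fapp q (e.xs.map Term.ivar)))⟩,
             ⟨q, e.xs, G⟩}⟩) :
      Step (p, j, q) E F
  | head (p : FV) (j : ℕ) (q : FV) (E F : ExtProg Φ) (G : Term Φ)
      (hp : FreshIn p E) (hq : FreshIn q E) (hpq : p ≠ q) (happ : isApp E.head = true)
      (hG : (argsOf E.head)[j]? = some G) (himm : isImmediate G = false)
      (har : q.2.1 = E.fvars.length)
      (hF : F = ⟨E.fvars,
        withArgs E.head ((argsOf E.head).set j (.fapp q (E.fvars.map Term.ivar))),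
        E.body + {⟨q, E.fvars, G⟩}⟩) :
      Step (p, j, q) E F

/-- One-step reduction: arrow reduction for some label. -/
def Step1 (E F : ExtProg Φ) : Prop := ∃ l : Lbl, Step l E F

/-- The `~_E` relation on function variables used in the Amalgamation Lemma:
`p ~_E p'` iff both are the same recursion variable of `E` (body case) or
neither is a recursion variable of `E` (head case). -/
def SameCase (E : ExtProg Φ) (p p' : FV) : Prop :=
  (p = p' ∧ p ∈ bodyPvars E) ∨ (p ∉ bodyPvars E ∧ p' ∉ bodyPvars E)

/-- Size of an extended program: total number of occurrences of non-immediate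
proper subterms of its parts. -/
def sizeP (E : ExtProg Φ) : ℕ := sizeT E.head + (E.body.map (fun e => sizeT e.rhs)).sum

/-- An extended program is irreducible if all its parts are irreducible terms. -/
def IrrProg (E : ExtProg Φ) : Prop :=
  isIrreducible E.head = true ∧ ∀ e ∈ E.body, isIrreducible e.rhs = true

/-! ## Congruence -/

/-- `ρ` preserves sorts and arities of function variables. -/
def SortArityPres (ρ : FV → FV) : Prop := ∀ v : FV, (ρ v).1 = v.1 ∧ (ρ v).2.1 = v.2.1

/-- One equation is obtained from another by renaming the (bound) individual
variables and applying a renaming `ρ` of the function variables. -/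
def EqnCong (ρ : FV → FV) (e f : Eqn Φ) : Prop :=
  f.p = ρ e.p ∧ ∃ σ : ℕ → ℕ,
    (∀ a ∈ e.xs, ∀ b ∈ e.xs, σ a = σ b → a = b) ∧
    f.xs = e.xs.map σ ∧ f.rhs = renameV σ (renameF ρ e.rhs)

/-- Congruence of extended programs: an alphabetic change of the bound individual
and function variables together with a permutation of the body equations
(the latter being automatic in the multiset representation). -/
def Congruent (E F : ExtProg Φ) : Prop :=
  ∃ ρ : FV → FV, Function.Bijective ρ ∧ SortArityPres ρ ∧
    (∀ p : FV, p ∉ bodyPvars E → ρ p = p) ∧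
    F.fvars = E.fvars ∧ F.head = renameF ρ E.head ∧
    Multiset.Rel (EqnCong ρ) E.body F.body

/-- Full reduction: a (possibly empty) chain of one-step reductions followed by a
congruence, i.e. `E ≡_c F` or `E →₁ ⋯ →₁ F' ≡_c F`. -/
def Reduces (E F : ExtProg Φ) : Prop :=
  ∃ G : ExtProg Φ, Relation.ReflTransGen Step1 E G ∧ Congruent G F


/-! ## Semantics -/

section Semantics

variable {A : Type}

/-- An environment for the function variables: a partial function
`Aⁿ ⇀ A ⊕ Bool` for each function variable (`none` = divergence). -/
abbrev Env (A : Type) : Type := FV → List A → Option (A ⊕ Bool)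

/-- A `Φ`-structure on the universe `A`: a partial interpretation of each
primitive (`Sum.inl` for sort `ind`, `Sum.inr` for sort `bool`). -/
abbrev Struc (Φ A : Type) : Type := Φ → List A → Option (A ⊕ Bool)

/-- An environment is sort- and arity-respecting. -/
def GoodEnv (env : Env A) : Prop :=
  ∀ p : FV, ∀ as v, env p as = some v →
    as.length = p.2.1 ∧ (p.1 = Srt.ind → ∃ a, v = Sum.inl a) ∧
    (p.1 = Srt.bool → ∃ b, v = Sum.inr b)

/-- A structure is sort- and arity-respecting. -/
def GoodStruc (St : Struc Φ A) (arΦ : Φ → ℕ) (sΦ : Φ → Srt) : Prop :=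
  ∀ φ as v, St φ as = some v →
    as.length = arΦ φ ∧ (sΦ φ = Srt.ind → ∃ a, v = Sum.inl a) ∧
    (sΦ φ = Srt.bool → ∃ b, v = Sum.inr b)

/-- A structure is total (on arguments of the right arity). -/
def TotalStruc (St : Struc Φ A) (arΦ : Φ → ℕ) : Prop :=
  ∀ φ as, as.length = arΦ φ → (St φ as).isSome

mutual
/-- Kleene evaluation of terms: `none` means divergence; arguments of
applications are evaluated strictly and must be of sort `ind`; the conditional
evaluates its test first and then the selected branch. -/
def eval (St : Struc Φ A) (iv : ℕ → A) (env : Env A) : Term Φ → Option (A ⊕ Bool)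
  | .tt => some (Sum.inr true)
  | .ff => some (Sum.inr false)
  | .ivar i => some (Sum.inl (iv i))
  | .fapp p args =>
      match evalArgs St iv env args with
      | none => none
      | some as => env p as
  | .prim f args =>
      match evalArgs St iv env args with
      | none => none
      | some as => St f as
  | .cond _ a b c =>
      match eval St iv env a with
      | some (Sum.inr true) => eval St iv env b
      | some (Sum.inr false) => eval St iv env c
      | _ => none

def evalArgs (St : Struc Φ A) (iv : ℕ → A) (env : Env A) :
    List (Term Φ) → Option (List A)
  | [] => some []
  | t :: ts =>
      match eval St iv env t with
      | some (Sum.inl a) =>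
          match evalArgs St iv env ts with
          | some as => some (a :: as)
          | none => none
      | _ => none
end

/-- Validity of the identity `E = F` in the structure: Kleene strong equality
under every assignment of individuals to the individual variables and of
sort-respecting partial functions to the function variables. -/
def Valid (St : Struc Φ A) (E F : Term Φ) : Prop :=
  ∀ (iv : ℕ → A) (env : Env A), GoodEnv env → eval St iv env E = eval St iv env F

/-- An individual variable is *placed* in the identity
`φ(zs₁) = ψ(zs₂)` if it is one of the listed immediate arguments. -/
def Placed (zs₁ zs₂ : List (Term Φ)) (s : ℕ) : Prop := Term.ivar s ∈ zs₁ ++ zs₂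

/-- Injective validity `A ⊨_inj φ(zs₁) = ψ(zs₂)`: validity under all
assignments which are injective on the placed individual variables. -/
def ValidInjId (St : Struc Φ A) (φ ψ : Φ) (zs₁ zs₂ : List (Term Φ)) : Prop :=
  ∀ (iv : ℕ → A) (env : Env A), GoodEnv env →
    (∀ s t, Placed zs₁ zs₂ s → Placed zs₁ zs₂ t → iv s = iv t → s = t) →
    eval St iv env (.prim φ zs₁) = eval St iv env (.prim ψ zs₂)

/-- Bind the variables `xs` to the values `as` on top of the assignment `iv`. -/
def bindList (xs : List ℕ) (as : List A) (iv : ℕ → A) (i : ℕ) : A :=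
  match xs.findIdx? (· = i) with
  | some k => as.getD k (iv i)
  | none => iv i

/-- `env` solves the system of recursive equations in the body of `E`. -/
def Solves (St : Struc Φ A) (iv : ℕ → A) (E : ExtProg Φ) (env : Env A) : Prop :=
  ∀ e ∈ E.body, ∀ as : List A, as.length = e.xs.length →
    env e.p as = eval St (bindList e.xs as iv) env e.rhs

/-- The pointwise partial-function (information) ordering on environments. -/
def envLE (env env' : Env A) : Prop :=
  ∀ p as, env p as = none ∨ env p as = env' p as

/-- `Den St iv E w` : the denotation of the extended program `E` at the
assignment `iv` is `w`, computed by evaluating the head at the least solution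
of the body. -/
def Den (St : Struc Φ A) (iv : ℕ → A) (E : ExtProg Φ) (w : Option (A ⊕ Bool)) : Prop :=
  ∃ env : Env A, Solves St iv E env ∧ (∀ env', Solves St iv E env' → envLE env env') ∧
    eval St iv env E.head = w

/-! ## Recursors and intensions -/

/-- The renaming of individual variables matching the list `xs` with the list `ys`. -/
def bindRen (xs ys : List ℕ) (i : ℕ) : ℕ :=
  match xs.findIdx? (· = i) with
  | some k => ys.getD k i
  | none => i

/-- The parts of two irreducible programs define the same functional, modulo the
renaming `ρ` of the recursion variables and the matching of the bound individual
variables. -/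
def EqnSemEq (St : Struc Φ A) (ρ : FV → FV) (e f : Eqn Φ) : Prop :=
  e.p = ρ f.p ∧ e.xs.length = f.xs.length ∧
  ∀ (iv : ℕ → A) (env : Env A), GoodEnv env →
    eval St iv env e.rhs = eval St iv env (renameV (bindRen f.xs e.xs) (renameF ρ f.rhs))

/-- The recursors of `E` and `F` on the structure are equal (strongly
isomorphic): the bodies match up to a sort- and arity-preserving bijection of the
recursion variables, with the corresponding parts denoting the same functionals. -/
def RecEq (St : Struc Φ A) (E F : ExtProg Φ) : Prop :=
  ∃ ρ : FV → FV, Function.Bijective ρ ∧ SortArityPres ρ ∧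
    (∀ (iv : ℕ → A) (env : Env A), GoodEnv env →
      eval St iv env E.head = eval St iv env (renameF ρ F.head)) ∧
    Multiset.Rel (EqnSemEq St ρ) E.body F.body

/-- Intensional equivalence on a structure: the referential intensions (the
recursors of the canonical forms) of the two programs are equal. -/
def IntEqOn (St : Struc Φ A) (E F : ExtProg Φ) : Prop :=
  ∃ E' F' : ExtProg Φ, Reduces E E' ∧ IrrProg E' ∧ Reduces F F' ∧ IrrProg F' ∧
    RecEq St E' F'

end Semantics

/-- Global intensional equivalence: equal referential intensions in every
infinite `Φ`-structure. -/
def GlobalIntEq (E F : ExtProg Φ) : Prop :=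
  ∀ (A : Type) (St : Struc Φ A), Infinite A → IntEqOn St E F

/-- A program is proper if none of its parts is an immediate term of Boolean sort. -/
def ProperProg (E : ExtProg Φ) : Prop :=
  ¬(isImmediate E.head = true ∧ immSort E.head = Srt.bool) ∧
  ∀ e ∈ E.body, ¬(isImmediate e.rhs = true ∧ immSort e.rhs = Srt.bool)


/-! ## Pure algebraic terms (Statement 0) -/

/-- Pure algebraic terms: built only from individual variables and function
variables of sort `ind` (of the correct arities) by application. -/
inductive PureAlg : Term Φ → Prop where
  | ivar (i : ℕ) : PureAlg (.ivar i)
  | fapp (n i : ℕ) (args : List (Term Φ)) (hargs : ∀ t ∈ args, PureAlg t)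
      (hlen : args.length = n) : PureAlg (.fapp (Srt.ind, n, i) args)

/-! ## Bare identities (Statements 14, 16) -/

/-- A term is an individual variable or a nullary function variable of sort `ind`. -/
def BareVarT (t : Term Φ) : Prop :=
  (∃ i, t = Term.ivar i) ∨ (∃ i, t = Term.fapp (Srt.ind, 0, i) [])

/-- A bare variable: `(false, i)` codes the individual variable `v_i`,
`(true, i)` codes the nullary function variable `p^{ind,0}_i`. -/
abbrev BareVar : Type := Bool × ℕ

/-- Canonical choice of bare variables: each variable occurring for the first
time is the first unused variable of its kind in the fixed alternating list
`v₀, p₀, v₁, p₁, …`. -/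
def CanonicalBare (xs : List BareVar) : Prop :=
  ∀ i x, xs[i]? = some x → (∀ j < i, xs[j]? ≠ some x) →
    x.2 = (((xs.take i).filter (fun y => y.1 == x.1)).dedup).length

/-- The representative function of an equivalence relation `r` on the placed
variables: a placed variable is sent to the least element of its class. -/
noncomputable def repFun (placed : ℕ → Prop) (r : ℕ → ℕ → Prop) (s : ℕ) : ℕ :=
  open Classical in
  if placed s then sInf {j | r s j} else s

/-! ## Propositional programs coding graphs (Statement 19) -/

/-- The propositional variable `r`. -/
def rVar : FV := (Srt.bool, 0, 0)

/-- The propositional variable `p_i`. -/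
def pVar (n : ℕ) (i : Fin n) : FV := (Srt.bool, 0, 1 + (i : ℕ))

/-- The propositional variable `p_{ij}`. -/
def pijVar (n : ℕ) (i j : Fin n) : FV := (Srt.bool, 0, 1 + n + ((i : ℕ) * n + (j : ℕ)))

/-- The part `E_{ij}` of the program coding the graph `E`. -/
def edgeTerm (n : ℕ) (E : Fin n → Fin n → Bool) (i j : Fin n) : Term Empty :=
  if E i j then
    .cond Srt.bool (.fapp (pVar n i) []) (.fapp (pVar n j) []) (.fapp rVar [])
  else
    .cond Srt.bool (.fapp (pVar n i) []) (.fapp rVar []) (.fapp (pVar n j) [])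

/-- The irreducible propositional program `prog(E)` coding the graph `E`:
`true where { p_i = p_i : i < n } ∪ { p_{ij} = E_{ij} : i,j < n } ∪ { r = false }`. -/
def graphProg (n : ℕ) (E : Fin n → Fin n → Bool) : ExtProg Empty where
  fvars := []
  head := .tt
  body :=
    (Finset.univ.val.map (fun i : Fin n => (⟨pVar n i, [], .fapp (pVar n i) []⟩ : Eqn Empty)))
    + ((Finset.univ.val (α := Fin n × Fin n)).map
        (fun ij => (⟨pijVar n ij.1 ij.2, [], edgeTerm n E ij.1 ij.2⟩ : Eqn Empty)))
    + {⟨rVar, [], .ff⟩}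

section Denotation

variable {A : Type} {St : Struc Φ A}

theorem occursFL_eq_false {q : FV} {ts : List (Term Φ)} (h : occursFL q ts = false) :
    ∀ t ∈ ts, occursF q t = false := by
  induction ts with
  | nil => simp
  | cons t ts ih =>
    rw [occursFL, Bool.or_eq_false_iff] at h
    exact List.forall_mem_cons.2 ⟨h.1, ih h.2⟩

theorem occursF_eq_false_of_mem_argsOf {q : FV} {t s : Term Φ} (h : occursF q t = false)
    (hs : s ∈ argsOf t) : occursF q s = false := by
  cases t with
  | fapp p args =>
    rw [occursF, Bool.or_eq_false_iff] at h
    exact occursFL_eq_false h.2 s hs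
  | prim f args => exact occursFL_eq_false h s hs
  | cond s' a b c =>
    simp only [occursF, Bool.or_eq_false_iff] at h
    simp only [argsOf, List.mem_cons, List.not_mem_nil, or_false] at hs
    rcases hs with rfl | rfl | rfl <;> tauto
  | _ => simp [argsOf] at hs

mutual
theorem eval_congr {iv : ℕ → A} {env env' : Env A} :
    ∀ t : Term Φ, (∀ p, occursF p t = true → env p = env' p) →
      eval St iv env t = eval St iv env' t
  | .tt, _ => rfl
  | .ff, _ => rfl
  | .ivar _, _ => rfl
  | .fapp p args, h => by
    rw [eval, eval, evalArgs_congr args fun r hr => h r (by simp [occursF, hr]),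
      h p (by simp [occursF])]
  | .prim f args, h => by
    rw [eval, eval, evalArgs_congr args fun r hr => h r (by simp [occursF, hr])]
  | .cond s a b c, h => by
    rw [eval, eval, eval_congr a fun r hr => h r (by simp [occursF, hr]),
      eval_congr b fun r hr => h r (by simp [occursF, hr]),
      eval_congr c fun r hr => h r (by simp [occursF, hr])]

theorem evalArgs_congr {iv : ℕ → A} {env env' : Env A} :
    ∀ ts : List (Term Φ), (∀ p, occursFL p ts = true → env p = env' p) →
      evalArgs St iv env ts = evalArgs St iv env' ts
  | [], _ => rfl
  | t :: ts, h => by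
    rw [evalArgs, evalArgs, eval_congr t fun r hr => h r (by simp [occursFL, hr]),
      evalArgs_congr ts fun r hr => h r (by simp [occursFL, hr])]
end

theorem eval_congr_of_not_occurs {iv : ℕ → A} {env env' : Env A} {q : FV} {t : Term Φ}
    (hq : occursF q t = false) (h : ∀ r, r ≠ q → env r = env' r) :
    eval St iv env t = eval St iv env' t :=
  eval_congr t fun r hr => h r (by rintro rfl; simp [hq] at hr)

mutual
theorem eval_mono {iv : ℕ → A} {env env' : Env A} (h : envLE env env') :
    ∀ t : Term Φ, eval St iv env t = none ∨ eval St iv env t = eval St iv env' t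
  | .tt => Or.inr rfl
  | .ff => Or.inr rfl
  | .ivar _ => Or.inr rfl
  | .fapp p args => by
    rcases evalArgs_mono h args with h1 | h1
    · left; rw [eval, h1]
    · rw [eval, eval, h1]
      cases evalArgs St iv env' args with
      | none => left; rfl
      | some as => exact h p as
  | .prim f args => by
    rcases evalArgs_mono h args with h1 | h1
    · left; rw [eval, h1]
    · rw [eval, eval, h1]; exact Or.inr rfl
  | .cond s a b c => by
    rcases eval_mono h a with h1 | h1
    · left; rw [eval, h1]
    · rw [eval, eval, h1]
      rcases eval St iv env' a with _ | _ | _ | _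
      · exact Or.inl rfl
      · exact Or.inl rfl
      · exact eval_mono h c
      · exact eval_mono h b

theorem evalArgs_mono {iv : ℕ → A} {env env' : Env A} (h : envLE env env') :
    ∀ ts : List (Term Φ),
      evalArgs St iv env ts = none ∨ evalArgs St iv env ts = evalArgs St iv env' ts
  | [] => Or.inr rfl
  | t :: ts => by
    rcases eval_mono h t with h1 | h1
    · left; rw [evalArgs, h1]
    · rw [evalArgs, evalArgs, h1]
      rcases eval St iv env' t with _ | _ | _
      · exact Or.inl rfl
      · rcases evalArgs_mono h ts with h2 | h2
        · left; rw [h2]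
        · rw [h2]; exact Or.inr rfl
      · exact Or.inl rfl
end

theorem evalArgs_set {iv : ℕ → A} {env : Env A} {G X : Term Φ}
    (hX : eval St iv env X = eval St iv env G) :
    ∀ {ts : List (Term Φ)} {j : ℕ}, ts[j]? = some G →
      evalArgs St iv env (ts.set j X) = evalArgs St iv env ts
  | [], _, hG => by simp at hG
  | t :: ts, 0, hG => by
    simp only [List.getElem?_cons_zero, Option.some.injEq] at hG
    subst hG
    rw [List.set_cons_zero, evalArgs, evalArgs, hX]
  | t :: ts, j + 1, hG => by
    rw [List.getElem?_cons_succ] at hG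
    rw [List.set_cons_succ, evalArgs, evalArgs, evalArgs_set hX hG]

theorem eval_withArgs_set {iv : ℕ → A} {env : Env A} {t G X : Term Φ} {j : ℕ}
    (happ : isApp t = true) (hG : (argsOf t)[j]? = some G)
    (hX : eval St iv env X = eval St iv env G) :
    eval St iv env (withArgs t ((argsOf t).set j X)) = eval St iv env t := by
  cases t with
  | fapp p args => rw [argsOf] at hG ⊢; rw [withArgs, eval, eval, evalArgs_set hX hG]
  | prim f args => rw [argsOf] at hG ⊢; rw [withArgs, eval, eval, evalArgs_set hX hG]
  | cond s a b c =>
    rw [argsOf] at hG ⊢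
    rcases j with _ | _ | _ | j <;> simp only [List.getElem?_cons_zero, List.getElem?_cons_succ,
      List.getElem?_nil, reduceCtorEq, Option.some.injEq] at hG <;>
      subst hG <;> simp [withArgs, eval, hX]
  | _ => simp [isApp] at happ

theorem evalArgs_map_ivar {iv : ℕ → A} {env : Env A} :
    ∀ xs : List ℕ, evalArgs St iv env (xs.map Term.ivar) = some (xs.map iv)
  | [] => rfl
  | x :: xs => by rw [List.map_cons, evalArgs, eval, evalArgs_map_ivar xs, List.map_cons]

theorem eval_fapp_map_ivar {iv : ℕ → A} {env : Env A} {q : FV} {xs : List ℕ} :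
    eval St iv env (.fapp q (xs.map Term.ivar)) = env q (xs.map iv) := by
  rw [eval, evalArgs_map_ivar]

theorem eval_split_arg {iv : ℕ → A} {env env' : Env A} {t G : Term Φ} {j : ℕ} {q : FV}
    {xs : List ℕ} (happ : isApp t = true) (hG : (argsOf t)[j]? = some G)
    (hq : occursF q t = false) (hagree : ∀ r, r ≠ q → env r = env' r)
    (hqG : env' q (xs.map iv) = eval St iv env' G) :
    eval St iv env t =
      eval St iv env' (withArgs t ((argsOf t).set j (.fapp q (xs.map Term.ivar)))) := by
  rw [eval_withArgs_set happ hG (by rw [eval_fapp_map_ivar, hqG])]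
  exact eval_congr_of_not_occurs hq hagree

theorem bindList_of_not_mem {xs : List ℕ} {as : List A} {iv : ℕ → A} {i : ℕ} (h : i ∉ xs) :
    bindList xs as iv i = iv i := by
  have hn : xs.findIdx? (· = i) = none := by
    rw [List.findIdx?_eq_none_iff]
    intro x hx
    simpa using ne_of_mem_of_not_mem hx h
  simp only [bindList, hn]

theorem bindList_map_eq {xs : List ℕ} {g iv : ℕ → A} (hg : ∀ i, i ∉ xs → g i = iv i) :
    bindList xs (xs.map g) iv = g := by
  funext i
  by_cases hi : i ∈ xs
  · have hsome : (xs.findIdx? (· = i)).isSome := by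
      rw [List.findIdx?_isSome, List.any_eq_true]
      exact ⟨i, hi, by simp⟩
    obtain ⟨k, hk⟩ := Option.isSome_iff_exists.mp hsome
    obtain ⟨hlt, hxk, -⟩ := List.findIdx?_eq_some_iff_getElem.mp hk
    simp [bindList, hk, List.getD_eq_getElem?_getD, hlt, of_decide_eq_true hxk]
  · rw [bindList_of_not_mem hi, hg i hi]

theorem bindList_map_bindList (xs : List ℕ) (as : List A) (iv : ℕ → A) :
    bindList xs (xs.map (bindList xs as iv)) iv = bindList xs as iv :=
  bindList_map_eq fun _ hi => bindList_of_not_mem hi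

theorem bindList_map_self (xs : List ℕ) (iv : ℕ → A) : bindList xs (xs.map iv) iv = iv :=
  bindList_map_eq fun _ _ => rfl

def SolvesEqn (St : Struc Φ A) (iv : ℕ → A) (env : Env A) (e : Eqn Φ) : Prop :=
  ∀ as : List A, as.length = e.xs.length → env e.p as = eval St (bindList e.xs as iv) env e.rhs

theorem solves_iff_forall_solvesEqn {iv : ℕ → A} {E : ExtProg Φ} {env : Env A} :
    Solves St iv E env ↔ ∀ e ∈ E.body, SolvesEqn St iv env e :=
  Iff.rfl

theorem solvesEqn_congr {iv : ℕ → A} {env env' : Env A} {q : FV} {e : Eqn Φ} (hp : e.p ≠ q)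
    (hq : occursF q e.rhs = false) (h : ∀ r, r ≠ q → env r = env' r) :
    SolvesEqn St iv env e ↔ SolvesEqn St iv env' e :=
  forall₂_congr fun _ _ => by rw [h e.p hp, eval_congr_of_not_occurs hq h]

theorem forall_solvesEqn_congr {iv : ℕ → A} {env env' : Env A} {q : FV} {B : Multiset (Eqn Φ)}
    (hB : ∀ e ∈ B, e.p ≠ q ∧ occursF q e.rhs = false) (h : ∀ r, r ≠ q → env r = env' r) :
    (∀ e ∈ B, SolvesEqn St iv env e) ↔ ∀ e ∈ B, SolvesEqn St iv env' e :=
  forall₂_congr fun e he => solvesEqn_congr (hB e he).1 (hB e he).2 h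

def eqnFun (St : Struc Φ A) (iv : ℕ → A) (env : Env A) (xs : List ℕ) (G : Term Φ) :
    List A → Option (A ⊕ Bool) :=
  fun bs => if bs.length = xs.length then eval St (bindList xs bs iv) env G else none

theorem solvesEqn_update_eqnFun {iv : ℕ → A} {env : Env A} {q : FV} {xs : List ℕ} {G : Term Φ}
    (hG : occursF q G = false) :
    SolvesEqn St iv (Function.update env q (eqnFun St iv env xs G)) ⟨q, xs, G⟩ := by
  intro bs hbs
  dsimp only at hbs ⊢
  rw [Function.update_self, eqnFun, if_pos hbs]
  exact eval_congr_of_not_occurs hG fun r hr => (Function.update_of_ne hr _ _).symm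

theorem envLE_update_eqnFun {iv : ℕ → A} {env env' : Env A} {q : FV} {xs : List ℕ}
    {G : Term Φ} (hle : envLE env env') (hsol : SolvesEqn St iv env' ⟨q, xs, G⟩) :
    envLE (Function.update env q (eqnFun St iv env xs G)) env' := by
  intro r bs
  by_cases hr : r = q
  · subst hr
    rw [Function.update_self, eqnFun]
    split_ifs with hbs
    · rw [hsol bs hbs]
      exact eval_mono hle G
    · exact Or.inl rfl
  · rw [Function.update_of_ne hr]
    exact hle r bs

theorem envLE_update_none {env env' env'' : Env A} {q : FV} (hle : envLE env env')
    (h : ∀ r, r ≠ q → env' r = env'' r) : envLE (Function.update env q fun _ => none) env'' := by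
  intro r bs
  by_cases hr : r = q
  · subst hr
    exact Or.inl (by rw [Function.update_self])
  · rw [Function.update_of_ne hr, ← h r hr]
    exact hle r bs

def SplitsOff (St : Struc Φ A) (iv : ℕ → A) (q : FV) (xs : List ℕ) (G : Term Φ)
    (E F : ExtProg Φ) : Prop :=
  ⟨q, xs, G⟩ ∈ F.body ∧ occursF q G = false ∧
    ∀ env env' : Env A, (∀ r, r ≠ q → env r = env' r) → SolvesEqn St iv env' ⟨q, xs, G⟩ →
      (Solves St iv E env ↔ Solves St iv F env') ∧
        eval St iv env E.head = eval St iv env' F.head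

theorem den_iff_of_splitsOff {iv : ℕ → A} {q : FV} {xs : List ℕ} {G : Term Φ}
    {E F : ExtProg Φ} (h : SplitsOff St iv q xs G E F) (w : Option (A ⊕ Bool)) :
    Den St iv E w ↔ Den St iv F w := by
  obtain ⟨hmem, hG, hsplit⟩ := h
  have hext : ∀ env : Env A, let env' := Function.update env q (eqnFun St iv env xs G)
      (Solves St iv E env ↔ Solves St iv F env') ∧
        eval St iv env E.head = eval St iv env' F.head := fun env =>
    hsplit env _ (fun r hr => (Function.update_of_ne hr (eqnFun St iv env xs G) env).symm)
      (solvesEqn_update_eqnFun hG)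
  constructor
  · rintro ⟨env, hsol, hleast, rfl⟩
    refine ⟨_, (hext env).1.1 hsol, fun env' hsol' => ?_, (hext env).2.symm⟩
    have hsolE := (hsplit env' env' (fun _ _ => rfl) (hsol' _ hmem)).1.2 hsol'
    exact envLE_update_eqnFun (hleast env' hsolE) (hsol' _ hmem)
  · rintro ⟨env', hsol', hleast, rfl⟩
    have hdel := hsplit (Function.update env' q fun _ => none) env'
      (fun r hr => Function.update_of_ne hr _ _) (hsol' _ hmem)
    refine ⟨_, hdel.1.2 hsol', fun env hsol => ?_, hdel.2⟩
    exact envLE_update_none (hleast _ ((hext env).1.1 hsol))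
      fun r hr => Function.update_of_ne hr _ _

theorem Step.exists_splitsOff {l : Lbl} {E F : ExtProg Φ} (h : Step l E F) (St : Struc Φ A)
    (iv : ℕ → A) : ∃ q xs G, SplitsOff St iv q xs G E F := by
  cases h with
  | body p j q E F s e G hbody hp happ hG _ hq _ hF =>
    subst hF hp
    obtain ⟨hqhead, hqbody⟩ := hq
    rw [hbody] at hqbody
    have hqe := hqbody e (Multiset.mem_add.2 (.inr (Multiset.mem_singleton_self e)))
    refine ⟨q, e.xs, G, by simp, occursF_eq_false_of_mem_argsOf hqe.2 (List.mem_of_getElem? hG),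
      fun env env' hagree hqsol => ⟨?_, eval_congr_of_not_occurs hqhead hagree⟩⟩
    have hsplit_e : SolvesEqn St iv env e ↔ SolvesEqn St iv env'
        ⟨e.p, e.xs, withArgs e.rhs ((argsOf e.rhs).set j (.fapp q (e.xs.map Term.ivar)))⟩ := by
      refine forall₂_congr fun as _ => ?_
      rw [hagree e.p hqe.1, eval_split_arg happ hG hqe.2 hagree]
      rw [hqsol _ (List.length_map _), bindList_map_bindList]
    simp only [solves_iff_forall_solvesEqn, hbody, Multiset.insert_eq_cons, Multiset.mem_add,
      Multiset.mem_cons, Multiset.mem_singleton, or_imp, forall_and, forall_eq, hqsol, and_true]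
    rw [forall_solvesEqn_congr (fun f hf => hqbody f (Multiset.mem_add.2 (.inl hf))) hagree,
      hsplit_e]
  | head p j q E F G _ hq _ happ hG _ _ hF =>
    subst hF
    obtain ⟨hqhead, hqbody⟩ := hq
    refine ⟨q, E.fvars, G, by simp, occursF_eq_false_of_mem_argsOf hqhead (List.mem_of_getElem? hG),
      fun env env' hagree hqsol => ⟨?_, eval_split_arg happ hG hqhead hagree ?_⟩⟩
    · simp only [solves_iff_forall_solvesEqn, Multiset.mem_add, Multiset.mem_singleton, or_imp,
        forall_and, forall_eq, hqsol, and_true]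
      exact forall_solvesEqn_congr hqbody hagree
    · rw [hqsol _ (List.length_map _), bindList_map_self]

end Denotation

/-- One-step (arrow) reduction preserves denotations: if
`E(x⃗) →^{(p,j,q)} F(x⃗)`, then in every `Φ`-structure and at every assignment the
denotations of `E(x⃗)` and `F(x⃗)` (least-fixed-point semantics, Kleene strong
equality of partial values) coincide. -/
theorem statement6 {Φ : Type} (l : Lbl) (E F : ExtProg Φ) (h : Step l E F)
    (A : Type) (St : Struc Φ A) (iv : ℕ → A) (w : Option (A ⊕ Bool)) :
    Den St iv E w ↔ Den St iv F w := by
  obtain ⟨q, xs, G, hsplit⟩ := h.exists_splitsOff St iv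
  exact den_iff_of_splitsOff hsplit w

end McCarthy
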